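/- Suppose c_j : ℝ → ℝ satisfy the Riccati system c_j' = c_{j+1} − (u₀/c₀) Σ_{i=0}^{j} c_i c_{j−i}, with u₀ a smooth function and c₀ nowhere zero. Then for m ∈ {0,1} and all n ≥ 1, the Hankel determinants satisfy (H^m_n)' = G^m_n − (2n−1+m) u₀ H^m_n. -/

import Mathlib

/-- Time-dependent Hankel determinant `H^m_n(t) = det(c_{i+j+m}(t))`. -/
noncomputable def Hf (c : ℕ → ℝ → ℝ) (m n : ℕ) (t : ℝ) : ℝ :=
  (Matrix.of fun i j : Fin n => c (i.val + j.val + m) t).det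

/-- `G^m_n(t)`: the Hankel determinant `H^m_n(t)` with its last row shifted
forward by one index; by convention `G^m_0 = 0`. -/
noncomputable def Gf (c : ℕ → ℝ → ℝ) (m n : ℕ) (t : ℝ) : ℝ :=
  if n = 0 then 0 else
  (Matrix.of fun i j : Fin n =>
    if i.val = n - 1 then c (m + n + j.val) t else c (i.val + j.val + m) t).det

/-!
By Jacobi's formula the derivative of `det A`, `A = (c_{i+j+m})`, is `tr (A' · adj A)`, and this
is additive in `A'`. The linear part `c_{j+1}` of the Riccati system shifts every row of `A` to
the next one, so only the last row survives and gives `G^m_n`. The quadratic part is the Hankel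
matrix `Q` of the self-convolution of `c`, and splitting the convolution sum gives
`Q = T A + A U` with `T`, `U` triangular Toeplitz matrices in `c`; hence
`tr (Q · adj A) = (tr T + tr U) det A = (2n - 1 + m) c₀ det A`.
-/

open Matrix Finset

namespace Matrix

variable {ι R : Type*} [Fintype ι] [DecidableEq ι] [CommRing R]

theorem det_updateRow_eq_vecMul_adjugate (A : Matrix ι ι R) (i : ι) (b : ι → R) :
    (A.updateRow i b).det = (b ᵥ* adjugate A) i := by
  rw [← cramer_transpose_apply, cramer_eq_adjugate_mulVec, ← adjugate_transpose, mulVec_transpose]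

theorem sum_det_updateRow_eq_trace_mul_adjugate (A X : Matrix ι ι R) :
    ∑ i, (A.updateRow i (X i)).det = trace (X * adjugate A) := by
  simp only [det_updateRow_eq_vecMul_adjugate]
  rfl

theorem trace_mul_add_mul_mul_adjugate (A B C : Matrix ι ι R) :
    trace ((B * A + A * C) * adjugate A) = (trace B + trace C) * A.det := by
  rw [add_mul, trace_add, Matrix.mul_assoc B, mul_adjugate, trace_mul_cycle A, adjugate_mul]
  simp only [smul_mul, Matrix.mul_smul, Matrix.one_mul, Matrix.mul_one, trace_smul, smul_eq_mul]
  ring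

theorem trace_mul_adjugate_of_row_castSucc_eq {n : ℕ}
    (A X : Matrix (Fin (n + 1)) (Fin (n + 1)) R) (h : ∀ i : Fin n, X i.castSucc = A i.succ) :
    trace (X * adjugate A) = (A.updateRow (Fin.last n) (X (Fin.last n))).det := by
  rw [← sum_det_updateRow_eq_trace_mul_adjugate, Fin.sum_univ_castSucc]
  simp only [h, det_updateRow_eq_zero Fin.castSucc_lt_succ.ne', sum_const_zero, zero_add]

theorem hasDerivAt_det {𝕜 : Type*} [NontriviallyNormedField 𝕜] {M : 𝕜 → Matrix ι ι 𝕜}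
    {M' : Matrix ι ι 𝕜} {t : 𝕜}
    (h : ∀ i j, HasDerivAt (fun s => M s i j) (M' i j) t) :
    HasDerivAt (fun s => (M s).det) (trace (M' * adjugate (M t))) t := by
  let D : ContinuousMultilinearMap 𝕜 (fun _ : ι => ι → 𝕜) 𝕜 :=
    { toMultilinearMap := (detRowAlternating : (ι → 𝕜) [⋀^ι]→ₗ[𝕜] 𝕜).toMultilinearMap
      cont := continuous_id.matrix_det }
  have hM : HasDerivAt M M' t := hasDerivAt_pi.2 fun i => hasDerivAt_pi.2 fun j => h i j
  rw [← sum_det_updateRow_eq_trace_mul_adjugate]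
  exact ((D.hasFDerivAt (M t)).comp_hasDerivAt t hM).congr_deriv
    ((D.linearDeriv_apply _ _).trans rfl)

end Matrix

theorem Fin.sum_univ_ite_eq_sum {M : Type*} [AddCommMonoid M] {n : ℕ} (P : ℕ → Prop)
    [DecidablePred P] {s : Finset ℕ} (hs : ∀ i, i ∈ s ↔ i < n ∧ P i) (f : ℕ → M) :
    ∑ i : Fin n, (if P i then f i else 0) = ∑ i ∈ s, f i := by
  rw [Fin.sum_univ_eq_sum_range (fun i => if P i then f i else 0), ← sum_filter]
  congr 1
  ext i
  simp [hs]

section Hankel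

variable {R : Type*}

def hankel (a : ℕ → R) (m n : ℕ) : Matrix (Fin n) (Fin n) R :=
  of fun i j => a (i + j + m)

def lowerToeplitz [Zero R] (a : ℕ → R) (n : ℕ) : Matrix (Fin n) (Fin n) R :=
  of fun i j => if j ≤ i then a (i - j) else 0

/-- Upper triangular Toeplitz matrix of `a` with its first `p` rows replaced by zero. -/
def upperToeplitz [Zero R] (a : ℕ → R) (p n : ℕ) : Matrix (Fin n) (Fin n) R :=
  of fun i j => if p ≤ (i : ℕ) ∧ i ≤ j then a (j - i) else 0

def selfConvolution [Semiring R] (a : ℕ → R) (k : ℕ) : R :=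
  ∑ l ∈ range (k + 1), a l * a (k - l)

theorem trace_lowerToeplitz [Semiring R] (a : ℕ → R) (n : ℕ) :
    trace (lowerToeplitz a n) = n * a 0 := by
  simp [trace, lowerToeplitz]

theorem trace_upperToeplitz [Semiring R] (a : ℕ → R) (p n : ℕ) :
    trace (upperToeplitz a p n) = (n - p : ℕ) * a 0 := by
  simp only [trace, Matrix.diag, upperToeplitz, of_apply, le_refl, and_true, Nat.sub_self]
  rw [Fin.sum_univ_eq_sum_range (fun i => if p ≤ i then a 0 else 0), ← sum_filter,
    range_eq_Ico, Ico_filter_le, sum_const, Nat.card_Ico, nsmul_eq_mul]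
  simp

theorem selfConvolution_split [Semiring R] {m : ℕ} (hm : m ≤ 1) (a : ℕ → R) (r j : ℕ) :
    selfConvolution a (r + j + m) = ∑ v ∈ range (r + 1), a (r - v) * a (v + j + m)
      + ∑ v ∈ Ico (1 - m) (j + 1), a (r + v + m) * a (j - v) := by
  have hlow : ∑ v ∈ range (r + 1), a (r - v) * a (v + j + m)
      = ∑ l ∈ range (r + 1), a l * a (r + j + m - l) := by
    rw [← sum_range_reflect (fun l => a l * a (r + j + m - l))]
    refine sum_congr rfl fun v hv => ?_
    rw [mem_range] at hv
    congr 2; omega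
  have hhigh : ∑ v ∈ Ico (1 - m) (j + 1), a (r + v + m) * a (j - v)
      = ∑ k ∈ range (j + m), a (r + 1 + k) * a (r + j + m - (r + 1 + k)) := by
    rw [sum_Ico_eq_sum_range, show j + 1 - (1 - m) = j + m by omega]
    refine sum_congr rfl fun k _ => ?_
    rw [show r + (1 - m + k) + m = r + 1 + k by omega,
      show j - (1 - m + k) = r + j + m - (r + 1 + k) by omega]
  rw [selfConvolution, hlow, hhigh, show r + j + m + 1 = r + 1 + (j + m) by omega, sum_range_add]

theorem hankel_selfConvolution [Semiring R] {m : ℕ} (hm : m ≤ 1) (a : ℕ → R) (n : ℕ) :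
    hankel (selfConvolution a) m n
      = lowerToeplitz a n * hankel a m n + hankel a m n * upperToeplitz a (1 - m) n := by
  ext r j
  simp only [hankel, lowerToeplitz, upperToeplitz, Matrix.add_apply, mul_apply, of_apply, ite_mul,
    zero_mul, mul_ite, mul_zero, Fin.le_iff_val_le_val]
  rw [selfConvolution_split hm,
    ← Fin.sum_univ_ite_eq_sum (n := n) (· ≤ (r : ℕ)) (s := range (r + 1)) (by grind),
    ← Fin.sum_univ_ite_eq_sum (n := n) (fun v => 1 - m ≤ v ∧ v ≤ (j : ℕ))
      (s := Ico (1 - m) (j + 1)) (by grind)]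

theorem hankel_succ_apply_castSucc (a : ℕ → R) (m n : ℕ) (i : Fin n) :
    hankel a (m + 1) (n + 1) i.castSucc = hankel a m (n + 1) i.succ := by
  funext j
  simp only [hankel, of_apply, Fin.val_castSucc, Fin.val_succ]
  congr 1
  omega

end Hankel

theorem Gf_succ_eq_det_updateRow (c : ℕ → ℝ → ℝ) (m n : ℕ) (t : ℝ) :
    Gf c m (n + 1) t = ((hankel (c · t) m (n + 1)).updateRow (Fin.last n)
      (hankel (c · t) (m + 1) (n + 1) (Fin.last n))).det := by
  rw [Gf, if_neg n.succ_ne_zero]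
  congr 1
  ext i j
  simp only [updateRow_apply, hankel, of_apply, Fin.ext_iff, Fin.val_last, Nat.add_sub_cancel]
  split_ifs
  · congr 1
    omega
  · rfl

/-- Under the Riccati system `c_j' = c_{j+1} − (u₀/c₀) Σ_{i=0}^{j} c_i c_{j−i}`,
with `c₀` nowhere zero, one has `(H^m_n)' = G^m_n − (2n−1+m) u₀ H^m_n`. -/
theorem deriv_hankel_volterra (c : ℕ → ℝ → ℝ) (u₀ : ℝ → ℝ)
    (hc0 : ∀ t, c 0 t ≠ 0)
    (hc : ∀ j t, HasDerivAt (c j)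
      (c (j + 1) t - u₀ t / c 0 t * ∑ i ∈ Finset.range (j + 1), c i t * c (j - i) t) t)
    (m : ℕ) (hm : m = 0 ∨ m = 1) (n : ℕ) (hn : 1 ≤ n) (t : ℝ) :
    HasDerivAt (fun s => Hf c m n s)
      (Gf c m n t - ((2 * n - 1 + m : ℕ) : ℝ) * u₀ t * Hf c m n t) t := by
  obtain ⟨n, rfl⟩ : ∃ k, n = k + 1 := ⟨n - 1, by omega⟩
  set a : ℕ → ℝ := (c · t)
  have hder : HasDerivAt (fun s => Hf c m (n + 1) s)
      (trace ((hankel a (m + 1) (n + 1) - (u₀ t / c 0 t) • hankel (selfConvolution a) m (n + 1))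
        * adjugate (hankel a m (n + 1)))) t :=
    hasDerivAt_det fun i j => by
      simpa [hankel, selfConvolution, a, add_assoc] using hc (i + j + m) t
  convert hder using 1
  rw [sub_mul, trace_sub, smul_mul, trace_smul, hankel_selfConvolution (by omega),
    trace_mul_add_mul_mul_adjugate, trace_lowerToeplitz, trace_upperToeplitz,
    trace_mul_adjugate_of_row_castSucc_eq _ _ (hankel_succ_apply_castSucc a m n),
    ← Gf_succ_eq_det_updateRow]
  have hcount : 2 * (n + 1) - 1 + m = (n + 1) + (n + 1 - (1 - m)) := by omega
  rw [hcount, Nat.cast_add, smul_eq_mul]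
  change _ = _ - _ * ((_ * c 0 t + _ * c 0 t) * Hf c m (n + 1) t)
  field_simp [hc0 t]
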